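/- Let x be a higher-order type in which each label occurs at most once and let H be a pairing on x. Define P(x,H) := {b | b is all-ones on out(x) \ out(H), and for every (A,A') ∈ H, b A = true implies b A' = true}. Then D(x) ∩ S(x,H) = ∅ if and only if D(x) ∩ P(x,H) = ∅. -/
import Mathlib


/-- Higher-order types over a type `σ` of elementary labels. -/
inductive Ty (σ : Type) : Type where
  | elem : σ → Ty σ
  | arrow : Ty σ → Ty σ → Ty σ

namespace Ty

variable {σ : Type} [DecidableEq σ]

/-- The labels occurring in a type. -/
def leaves : Ty σ → Finset σ
  | elem A => {A}
  | arrow x y => leaves x ∪ leaves y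

/-- Every label occurs at most once. -/
def NoDup : Ty σ → Prop
  | elem _ => True
  | arrow x y => NoDup x ∧ NoDup y ∧ Disjoint x.leaves y.leaves

/-- The pair (input labels, output labels) of a type. -/
def inOut : Ty σ → Finset σ × Finset σ
  | elem A => (∅, {A})
  | arrow x y => ((inOut x).2 ∪ (inOut y).1, (inOut x).1 ∪ (inOut y).2)

/-- Input labels. -/
def ins (x : Ty σ) : Finset σ := (inOut x).1

/-- Output labels. -/
def outs (x : Ty σ) : Finset σ := (inOut x).2

/-- A bit assignment `b` is all-ones on a finite set `S` of labels. -/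
def AllOnes (b : σ → Bool) (S : Finset σ) : Prop := ∀ i ∈ S, b i = true

/-- The set `D(x)` of bit assignments of a type. -/
def D : Ty σ → Set (σ → Bool)
  | elem A => {b | b A = false}
  | arrow x y => {b | b ∈ D y} ∪ {b | b ∉ D x ∧ ¬ AllOnes b x.leaves ∧ b ∉ D y}

/-- The immediate subterm relation. -/
inductive ImmSub : Ty σ → Ty σ → Prop
  | left (x z : Ty σ) : ImmSub x (arrow x z)
  | right (x z : Ty σ) : ImmSub x (arrow z x)

/-- Subterms: reflexive-transitive closure of the immediate subterm relation. -/
def Subterm {σ : Type} : Ty σ → Ty σ → Prop := Relation.ReflTransGen ImmSub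

/-- The critical set `S(x,A,B)`. -/
def Sset (x : Ty σ) (A B : σ) : Set (σ → Bool) :=
  {b | b A = false ∧ b B = false ∧ AllOnes b (x.outs \ {B})}

/-- `x` is no-signalling from `A` to `B`. -/
def NoSig (x : Ty σ) (A B : σ) : Prop := D x ∩ Sset x A B = ∅

/-- `x` is full-signalling from `A` to `B`. -/
def FullSig (x : Ty σ) (A B : σ) : Prop :=
  ¬ ∃ b : σ → Bool, ¬ AllOnes b x.leaves ∧ b ∉ D x ∧ b A = false ∧ b B = false ∧
    AllOnes b (x.ins \ {A})

/-- A pairing on `x`: a finite set of pairs (input label, output label) with all first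
components distinct and all second components distinct. -/
def IsPairing (x : Ty σ) (H : Finset (σ × σ)) : Prop :=
  (∀ p ∈ H, p.1 ∈ x.ins ∧ p.2 ∈ x.outs) ∧
  (∀ p ∈ H, ∀ q ∈ H, p.1 = q.1 → p = q) ∧
  (∀ p ∈ H, ∀ q ∈ H, p.2 = q.2 → p = q)

/-- The critical set `S(x,H)` for a pairing `H`. -/
def SsetH (x : Ty σ) (H : Finset (σ × σ)) : Set (σ → Bool) :=
  {b | AllOnes b (x.outs \ H.image Prod.snd) ∧ (∀ p ∈ H, b p.1 = b p.2) ∧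
    ∃ p ∈ H, b p.1 = false}

/-- The set `D(x ⊗ y)` for the tensor of two types with disjoint leaves. -/
def Dtensor (x y : Ty σ) : Set (σ → Bool) :=
  {b | b ∈ D x ∧ AllOnes b y.leaves} ∪ {b | b ∈ D y ∧ AllOnes b x.leaves} ∪ (D x ∩ D y)

/-- No-signalling from `A` to `B` for given data (set of bit assignments, output labels). -/
def NoSigData (D0 : Set (σ → Bool)) (outs0 : Finset σ) (A B : σ) : Prop :=
  D0 ∩ {b | b A = false ∧ b B = false ∧ AllOnes b (outs0 \ {B})} = ∅

/-- Full-signalling from `A` to `B` for given data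
(set of bit assignments, leaves, input labels). -/
def FullSigData (D0 : Set (σ → Bool)) (leaves0 ins0 : Finset σ) (A B : σ) : Prop :=
  ¬ ∃ b : σ → Bool, ¬ AllOnes b leaves0 ∧ b ∉ D0 ∧ b A = false ∧ b B = false ∧
    AllOnes b (ins0 \ {A})

end Ty

namespace Ty

/-- The set `P(x,H)`. -/
def PsetH {σ : Type} [DecidableEq σ] (x : Ty σ) (H : Finset (σ × σ)) :
    Set (σ → Bool) :=
  {b | AllOnes b (x.outs \ H.image Prod.snd) ∧ ∀ p ∈ H, b p.1 = true → b p.2 = true}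

end Ty

namespace Ty

variable {σ : Type} [DecidableEq σ]

lemma ins_arrow' (x y : Ty σ) : (arrow x y).ins = x.outs ∪ y.ins := rfl
lemma outs_arrow' (x y : Ty σ) : (arrow x y).outs = x.ins ∪ y.outs := rfl

lemma subset_leaves (x : Ty σ) : x.ins ⊆ x.leaves ∧ x.outs ⊆ x.leaves := by
  induction x with
  | elem A => simp [ins, outs, inOut, leaves]
  | arrow x y ihx ihy =>
    constructor
    · intro i hi
      rcases Finset.mem_union.mp hi with h | h
      · exact Finset.mem_union_left _ (ihx.2 h)
      · exact Finset.mem_union_right _ (ihy.1 h)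
    · intro i hi
      rcases Finset.mem_union.mp hi with h | h
      · exact Finset.mem_union_left _ (ihx.1 h)
      · exact Finset.mem_union_right _ (ihy.2 h)

lemma disj_ins_outs (x : Ty σ) (hx : x.NoDup) : Disjoint x.ins x.outs := by
  induction x with
  | elem A => simp [ins, inOut]
  | arrow x y ihx ihy =>
    obtain ⟨hxd, hyd, hd⟩ := hx
    rw [ins_arrow', outs_arrow', Finset.disjoint_union_left]
    constructor
    · rw [Finset.disjoint_union_right]
      exact ⟨(ihx hxd).symm, hd.mono (subset_leaves x).2 (subset_leaves y).2⟩
    · rw [Finset.disjoint_union_right]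
      exact ⟨(hd.mono (subset_leaves x).1 (subset_leaves y).1).symm, ihy hyd⟩

lemma allOnes_lemma (x : Ty σ) (b : σ → Bool) :
    (AllOnes b x.outs → b ∉ D x) ∧ (AllOnes b x.ins → b ∉ D x → AllOnes b x.leaves) := by
  induction x with
  | elem A =>
    constructor
    · intro h hD
      have := h A (by simp [outs, inOut])
      simp [D] at hD
      simp [hD] at this
    · intro _ hD i hi
      simp [leaves] at hi
      simp [D] at hD
      subst hi
      exact hD
  | arrow x y ihx ihy =>
    constructor
    · intro h hD
      have hox : AllOnes b x.ins := fun i hi => h i (by rw [outs_arrow']; exact Finset.mem_union_left _ hi)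
      have hoy : AllOnes b y.outs := fun i hi => h i (by rw [outs_arrow']; exact Finset.mem_union_right _ hi)
      rcases hD with hD | ⟨hnx, hna, hny⟩
      · exact ihy.1 hoy hD
      · exact hna (ihx.2 hox hnx)
    · intro h hD
      have hix : AllOnes b x.outs := fun i hi => h i (by rw [ins_arrow']; exact Finset.mem_union_left _ hi)
      have hiy : AllOnes b y.ins := fun i hi => h i (by rw [ins_arrow']; exact Finset.mem_union_right _ hi)
      have hny : b ∉ D y := fun hy => hD (Or.inl hy)
      have hax : AllOnes b x.leaves := by
        by_contra hax
        exact hD (Or.inr ⟨ihx.1 hix, hax, hny⟩)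
      intro i hi
      rcases Finset.mem_union.mp hi with hi | hi
      · exact hax i hi
      · exact ihy.2 hiy hny i hi

lemma monoD (x : Ty σ) : ∀ b b' : σ → Bool,
    (∀ i ∈ x.outs, b' i = true → b i = true) →
    (∀ i ∈ x.ins, b i = true → b' i = true) → b ∈ D x → b' ∈ D x := by
  induction x with
  | elem A =>
    intro b b' ho _ hb
    simp [D] at hb ⊢
    have := ho A (by simp [outs, inOut])
    cases h : b' A with
    | false => rfl
    | true => rw [this h] at hb; exact hb
  | arrow x y ihx ihy =>
    intro b b' ho hi hb
    have hox : ∀ i ∈ x.ins, b' i = true → b i = true :=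
      fun i h => ho i (by rw [outs_arrow']; exact Finset.mem_union_left _ h)
    have hoy : ∀ i ∈ y.outs, b' i = true → b i = true :=
      fun i h => ho i (by rw [outs_arrow']; exact Finset.mem_union_right _ h)
    have hix : ∀ i ∈ x.outs, b i = true → b' i = true :=
      fun i h => hi i (by rw [ins_arrow']; exact Finset.mem_union_left _ h)
    have hiy : ∀ i ∈ y.ins, b i = true → b' i = true :=
      fun i h => hi i (by rw [ins_arrow']; exact Finset.mem_union_right _ h)
    rcases hb with hb | ⟨hnx, hna, hny⟩
    · exact Or.inl (ihy b b' hoy hiy hb)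
    · by_cases hy : b' ∈ D y
      · exact Or.inl hy
      · refine Or.inr ⟨fun hx' => hnx (ihx b' b hix hox hx'), ?_, hy⟩
        intro hall
        have hbi : AllOnes b x.ins := by
          intro i hj
          exact hox i hj (hall i ((subset_leaves x).1 hj))
        exact hna ((allOnes_lemma x b).2 hbi hnx)

end Ty

open Ty in
/-- `D(x) ∩ S(x,H) = ∅ ↔ D(x) ∩ P(x,H) = ∅`. -/
theorem stmt16 {σ : Type} [DecidableEq σ] (x : Ty σ) (hx : x.NoDup)
    (H : Finset (σ × σ)) (hH : IsPairing x H) :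
    D x ∩ SsetH x H = ∅ ↔ D x ∩ PsetH x H = ∅ := by
  classical
  obtain ⟨hmem, hfst, hsnd⟩ := hH
  have hdisj := disj_ins_outs x hx
  constructor
  · intro hS
    rw [Set.eq_empty_iff_forall_notMem]
    rintro b ⟨hbD, hAll, hImp⟩
    set b' : σ → Bool := fun i => if ∃ p ∈ H, p.2 = i ∧ b p.1 = false then false else b i
      with hb'def
    have hlow : ∀ i, b' i = true → b i = true := by
      intro i h
      rw [hb'def] at h
      by_cases hc : ∃ p ∈ H, p.2 = i ∧ b p.1 = false
      · simp [hc] at h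
      · simpa [hc] using h
    have hfix : ∀ i, i ∉ H.image Prod.snd → b' i = b i := by
      intro i hi
      rw [hb'def]
      have : ¬ ∃ p ∈ H, p.2 = i ∧ b p.1 = false := by
        rintro ⟨p, hp, rfl, -⟩
        exact hi (Finset.mem_image_of_mem _ hp)
      simp [this]
    have hsndouts : ∀ i ∈ H.image Prod.snd, i ∈ x.outs := by
      intro i hi
      obtain ⟨p, hp, rfl⟩ := Finset.mem_image.mp hi
      exact (hmem p hp).2
    have hinsfix : ∀ i ∈ x.ins, b' i = b i := by
      intro i hi
      refine hfix i fun hc => ?_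
      exact Finset.disjoint_left.mp hdisj hi (hsndouts i hc)
    have hfst' : ∀ p ∈ H, b' p.1 = b p.1 := fun p hp => hinsfix p.1 (hmem p hp).1
    have hexists : ∃ p ∈ H, b p.1 = false := by
      by_contra h
      push_neg at h
      have hall : AllOnes b x.outs := by
        intro i hi
        by_cases hi2 : i ∈ H.image Prod.snd
        · obtain ⟨p, hp, rfl⟩ := Finset.mem_image.mp hi2
          exact hImp p hp (by simpa using h p hp)
        · exact hAll i (Finset.mem_sdiff.mpr ⟨hi, hi2⟩)
      exact (allOnes_lemma x b).1 hall hbD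
    have hb'D : b' ∈ D x :=
      monoD x b b' (fun i _ => hlow i) (fun i hi h => by rw [hinsfix i hi]; exact h) hbD
    have hsnd' : ∀ p ∈ H, b' p.1 = b' p.2 := by
      intro p hp
      cases hb1 : b p.1 with
      | false =>
        rw [hfst' p hp, hb1, hb'def]
        have : ∃ q ∈ H, q.2 = p.2 ∧ b q.1 = false := ⟨p, hp, rfl, hb1⟩
        simp [this]
      | true =>
        have h2 : b' p.2 = b p.2 := by
          rw [hb'def]
          have : ¬ ∃ q ∈ H, q.2 = p.2 ∧ b q.1 = false := by
            rintro ⟨q, hq, he, hqf⟩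
            have := hsnd q hq p hp he
            subst this
            rw [hb1] at hqf
            exact Bool.noConfusion hqf
          simp [this]
        rw [hfst' p hp, hb1, h2, hImp p hp hb1]
    have hb'S : b' ∈ SsetH x H := by
      refine ⟨?_, hsnd', ?_⟩
      · intro i hi
        rw [hfix i (Finset.mem_sdiff.mp hi).2]
        exact hAll i hi
      · obtain ⟨p, hp, hpf⟩ := hexists
        exact ⟨p, hp, by rw [hfst' p hp]; exact hpf⟩
    exact Set.eq_empty_iff_forall_notMem.mp hS b' ⟨hb'D, hb'S⟩
  · intro hP
    rw [Set.eq_empty_iff_forall_notMem]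
    rintro b ⟨hbD, hS1, hS2, hS3⟩
    refine Set.eq_empty_iff_forall_notMem.mp hP b ⟨hbD, hS1, ?_⟩
    intro p hp h
    rw [← hS2 p hp]
    exact h
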